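/- Let M be a 3-connected matroid that is not a wheel or a whirl, and let F = (e_1, e_2, …, e_{|F|}) be a maximal fan of M with |F| ≥ 3. If {e_1, e_2, e_3} is a triad, then e_1 is not contained in any triangle of M; dually, if {e_1, e_2, e_3} is a triangle, then e_1 is not contained in any triad of M. -/

import Mathlib

open Matroid Set

namespace DetPairs

variable {α : Type*}

/-- The rank of a set in a matroid: the maximum size of an independent subset
(as an integer, for convenient arithmetic). -/
noncomputable def r (M : Matroid α) (X : Set α) : ℤ :=
  ((sSup (Set.ncard '' {I | M.Indep I ∧ I ⊆ X}) : ℕ) : ℤ)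

/-- The connectivity function `λ_M(X) = r(X) + r(E − X) − r(M)`. -/
noncomputable def lam (M : Matroid α) (X : Set α) : ℤ :=
  r M X + r M (M.E \ X) - r M M.E

/-- Local connectivity `⊓(X,Y) = r(X) + r(Y) − r(X ∪ Y)`. -/
noncomputable def localConn (M : Matroid α) (X Y : Set α) : ℤ :=
  r M X + r M Y - r M (X ∪ Y)

/-- A circuit: a minimal dependent set. -/
def Circuit (M : Matroid α) (C : Set α) : Prop :=
  C ⊆ M.E ∧ ¬ M.Indep C ∧ ∀ D, D ⊂ C → M.Indep D

/-- A cocircuit: a circuit of the dual. -/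
def Cocircuit (M : Matroid α) (C : Set α) : Prop := Circuit M✶ C

/-- A triangle: a 3-element circuit. -/
def Triangle (M : Matroid α) (T : Set α) : Prop := Circuit M T ∧ T.ncard = 3

/-- A triad: a 3-element cocircuit. -/
def Triad (M : Matroid α) (T : Set α) : Prop := Cocircuit M T ∧ T.ncard = 3

/-- A quad: a 4-element set that is both a circuit and a cocircuit. -/
def Quad (M : Matroid α) (Q : Set α) : Prop :=
  Circuit M Q ∧ Cocircuit M Q ∧ Q.ncard = 4

/-- Deletion of a set of elements. -/
def Del (M : Matroid α) (D : Set α) : Matroid α := M ↾ (M.E \ D)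

/-- Contraction of a set of elements. -/
def Con (M : Matroid α) (C : Set α) : Matroid α := (M✶ ↾ (M.E \ C))✶

/-- `M` is 3-connected: it has no `k`-separation for `k = 1, 2`, where a
`k`-separation is a set `X` with `λ(X) = k − 1`, `|X| ≥ k` and `|E − X| ≥ k`. -/
def ThreeConnected (M : Matroid α) : Prop :=
  ∀ k : ℕ, 0 < k → k < 3 → ∀ X ⊆ M.E,
    ¬ (lam M X = (k : ℤ) - 1 ∧ (k : ℤ) ≤ X.ncard ∧ (k : ℤ) ≤ (M.E \ X).ncard)

/-- A detachable pair: distinct elements `e, f` such that `M \ e \ f` or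
`M / e / f` is 3-connected. -/
def DetachablePair (M : Matroid α) (e f : α) : Prop :=
  e ≠ f ∧ e ∈ M.E ∧ f ∈ M.E ∧
    (ThreeConnected (Del M {e, f}) ∨ ThreeConnected (Con M {e, f}))

/-- The triple of elements with indices `i, i+1, i+2` in an ordering. -/
def tri (e : ℕ → α) (i : ℕ) : Set α := {e i, e (i + 1), e (i + 2)}

/-- `(e 0, …, e (n-1))` is a fan ordering of length `n ≥ 3` in `M`:
consecutive triples alternate between triangles and triads. -/
def FanOrd (M : Matroid α) (n : ℕ) (e : ℕ → α) : Prop :=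
  3 ≤ n ∧ Set.InjOn e (Set.Iio n) ∧ (∀ i < n, e i ∈ M.E) ∧
    (Triangle M (tri e 0) ∨ Triad M (tri e 0)) ∧
    ∀ i, i + 3 < n →
      (Triangle M (tri e i) → Triad M (tri e (i + 1))) ∧
      (Triad M (tri e i) → Triangle M (tri e (i + 1)))

/-- A fan (as a set): either a 2-element subset of the ground set, or the
underlying set of a fan ordering of length at least 3. -/
def IsFan (M : Matroid α) (F : Set α) : Prop :=
  (F ⊆ M.E ∧ F.ncard = 2) ∨ ∃ n e, FanOrd M n e ∧ F = e '' Set.Iio n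

/-- A maximal fan: a fan contained in no strictly larger fan. -/
def MaximalFan (M : Matroid α) (F : Set α) : Prop :=
  IsFan M F ∧ ∀ F', IsFan M F' → F ⊆ F' → F' = F

/-- `M` is a wheel or a whirl: its ground set has a cyclic ordering of even size
`2n` in which consecutive triples alternate between triangles and triads. -/
def IsWheelOrWhirl (M : Matroid α) : Prop :=
  ∃ (n : ℕ) (e : ℕ → α), 2 ≤ n ∧ Set.InjOn e (Set.Iio (2 * n)) ∧
    M.E = e '' Set.Iio (2 * n) ∧
    ∀ i < 2 * n,
      (i % 2 = 0 → Triangle M {e i, e ((i + 1) % (2 * n)), e ((i + 2) % (2 * n))}) ∧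
      (i % 2 = 1 → Triad M {e i, e ((i + 1) % (2 * n)), e ((i + 2) % (2 * n))})

/-- An `M(K₄)`-separator: a 6-element set `{a,b,c,x,y,z}` where `{x,y,z}` is a
triad and `{a,b,c}`, `{a,x,y}`, `{b,x,z}`, `{c,y,z}` are triangles. -/
def MK4Sep (M : Matroid α) (S : Set α) : Prop :=
  ∃ a b c x y z : α, S = {a, b, c, x, y, z} ∧ S.ncard = 6 ∧
    Triad M {x, y, z} ∧ Triangle M {a, b, c} ∧ Triangle M {a, x, y} ∧
    Triangle M {b, x, z} ∧ Triangle M {c, y, z}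

/-- A vertical 3-separation `(X, {e}, Y)` of `M`. -/
def VertThreeSep (M : Matroid α) (X : Set α) (e : α) (Y : Set α) : Prop :=
  X ∪ {e} ∪ Y = M.E ∧ Disjoint X Y ∧ e ∉ X ∧ e ∉ Y ∧
    lam M X = 2 ∧ lam M Y = 2 ∧ e ∈ M.closure X ∧ e ∈ M.closure Y ∧
    3 ≤ r M X ∧ 3 ≤ r M Y

/-- `N` is a simplification of `M`: a restriction of `M` to a set of
representatives, one from each parallel class of nonloops. -/
def SimplificationOf (M N : Matroid α) : Prop :=
  ∃ X : Set α, (∀ x ∈ X, x ∈ M.E ∧ x ∉ M.closure ∅) ∧ N = M ↾ X ∧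
    ∀ y ∈ M.E, y ∉ M.closure ∅ →
      ∃! x, x ∈ X ∧ M.closure {y} = M.closure {x}


/-!
Let `T` be a triangle through `e 0` while `{e 0, e 1, e 2}` is a triad. By orthogonality `T`
contains `e 1` or `e 2` as well.

If `T = {x, e 0, e 1}` and `x ∉ F`, then `(x, e 0, e 1, …)` is a longer fan. If `x ∈ F`,
orthogonality with the triads of `F` forces `x = e (n - 1)` with `n` even. Then the odd-indexed
elements span `F` and the even-indexed ones together with `e (n - 1)` cospan it, so `λ(F) ≤ 1`.
By 3-connectivity `F = E`, and the triangle closes the fan into a wheel or a whirl.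

If `T = {x, e 0, e 2}` and `n ≤ 4`, swapping `e 1` and `e 2` reduces this to the first case.
Otherwise orthogonality with `{e 2, e 3, e 4}` gives `x = e 3` or `x = e 4`. For `x = e 3`,
circuit elimination with `{e 1, e 2, e 3}` makes the triad `{e 0, e 1, e 2}` a triangle, which
in a 3-connected matroid happens only for `U_{2,4}`. For `x = e 4`, circuit elimination (if
`n ≥ 6`) or the same connectivity count (if `n = 5`) gives a triangle through `e 0` and `e 1`,
which is the first case.

The dual statement is this argument applied to `M✶`.
-/

/-! ### Rank -/

section Rank

variable {M : Matroid α} [M.Finite] {C S X Y : Set α}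

lemma eRk_ne_top (M : Matroid α) [M.Finite] (X : Set α) : M.eRk X ≠ ⊤ :=
  (M.isRkFinite_set X).eRk_lt_top.ne

lemma r_eq_toNat_eRk (M : Matroid α) [M.Finite] (X : Set α) : r M X = (M.eRk X).toNat := by
  obtain ⟨I, hI⟩ := M.exists_isBasis' X
  have hmax : IsGreatest (ncard '' {J | M.Indep J ∧ J ⊆ X}) I.ncard := by
    refine ⟨⟨I, ⟨hI.indep, hI.subset⟩, rfl⟩, ?_⟩
    rintro _ ⟨J, ⟨hJ, hJX⟩, rfl⟩
    exact ENat.toNat_le_toNat (hI.encard_eq_eRk ▸ hJ.encard_le_eRk_of_subset hJX)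
      (encard_ne_top_iff.2 (M.set_finite I hI.indep.subset_ground))
  rw [r, hmax.csSup_eq, ← hI.encard_eq_eRk, ncard_def]

lemma r_mono (hXY : X ⊆ Y) : r M X ≤ r M Y := by
  rw [r_eq_toNat_eRk, r_eq_toNat_eRk]
  exact_mod_cast ENat.toNat_le_toNat (M.eRk_mono hXY) (eRk_ne_top M Y)

lemma r_le_ncard (hX : X.Finite) : r M X ≤ X.ncard := by
  rw [r_eq_toNat_eRk, ncard_def]
  exact_mod_cast ENat.toNat_le_toNat (M.eRk_le_encard X) (encard_ne_top_iff.2 hX)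

lemma r_le_of_subset_closure (h : X ⊆ M.closure S) : r M X ≤ r M S := by
  rw [r_eq_toNat_eRk, r_eq_toNat_eRk, ← M.eRk_closure_eq S]
  exact_mod_cast ENat.toNat_le_toNat (M.eRk_mono h) (eRk_ne_top M _)

lemma r_eq_ncard_of_indep (hI : M.Indep X) : r M X = X.ncard := by
  rw [r_eq_toNat_eRk, hI.eRk_eq_encard, ncard_def]

lemma r_lt_ncard_of_not_indep (hX : X ⊆ M.E) (hd : ¬ M.Indep X) : r M X < X.ncard := by
  have hlt := Dep.eRk_lt_encard ⟨hd, hX⟩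
  rw [← ENat.natCast_toNat (eRk_ne_top M X), ← (M.set_finite X hX).cast_ncard_eq] at hlt
  rw [r_eq_toNat_eRk]
  exact_mod_cast hlt

lemma r_isCircuit (hC : M.IsCircuit C) : r M C = C.ncard - 1 := by
  have h := congrArg ENat.toNat hC.eRk_add_one_eq
  rw [ENat.toNat_add (eRk_ne_top M C) ENat.one_ne_top, ← ncard_def, ENat.toNat_one] at h
  rw [r_eq_toNat_eRk]
  omega

lemma r_ground_le_add_r_compl (X : Set α) : r M M.E ≤ r M X + r M (M.E \ X) := by
  have h := ENat.toNat_le_toNat (M.eRk_union_le_eRk_add_eRk X (M.E \ X)) (by simp)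
  rw [union_sdiff_self, M.eRk_union_ground, eRank_def,
    ENat.toNat_add (eRk_ne_top M _) (eRk_ne_top M _)] at h
  rw [r_eq_toNat_eRk, r_eq_toNat_eRk, r_eq_toNat_eRk]
  exact_mod_cast h

lemma r_dual (hX : X ⊆ M.E) : r M✶ X = X.ncard + r M (M.E \ X) - r M M.E := by
  have h := congrArg ENat.toNat (M.eRk_dual_add_eRank X hX)
  rw [eRank_def, ENat.toNat_add (eRk_ne_top M✶ X) (eRk_ne_top M _),
    ENat.toNat_add (eRk_ne_top M _) (encard_ne_top_iff.2 (M.set_finite X hX))] at h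
  rw [r_eq_toNat_eRk, r_eq_toNat_eRk, r_eq_toNat_eRk, ncard_def]
  omega

lemma r_dual_ground (M : Matroid α) [M.Finite] : r M✶ M.E = M.E.ncard - r M M.E := by
  rw [r_dual subset_rfl, sdiff_self, r_eq_ncard_of_indep M.empty_indep, ncard_empty]
  ring

end Rank

/-! ### Circuits, triangles and triads -/

section Circuits

variable {M : Matroid α} {C D S X : Set α} {x : α}

lemma circuit_iff_isCircuit : Circuit M C ↔ M.IsCircuit C := by
  rw [isCircuit_iff_forall_ssubset, dep_iff, Circuit]
  tauto

lemma Triangle.isCircuit (hT : Triangle M X) : M.IsCircuit X := circuit_iff_isCircuit.1 hT.1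

lemma Triad.isCocircuit (hD : Triad M X) : M.IsCocircuit X := circuit_iff_isCircuit.1 hD.1

lemma triangle_dual_iff : Triangle M✶ X ↔ Triad M X := Iff.rfl

lemma triad_dual_iff : Triad M✶ X ↔ Triangle M X := by
  rw [Triad, Cocircuit, dual_dual, Triangle]

lemma _root_.Matroid.IsCircuit.notMem_of_inter_subset (hC : M.IsCircuit C)
    (hD : M.IsCocircuit D) (hxD : x ∈ D) (hCD : C ∩ D ⊆ {x}) : x ∉ C := fun hxC =>
  hC.inter_isCocircuit_ne_singleton hD (subset_antisymm hCD (singleton_subset_iff.2 ⟨hxC, hxD⟩))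

lemma _root_.Matroid.IsCircuit.mem_closure_of_sdiff_subset_closure (hC : M.IsCircuit C)
    (hx : x ∈ C) (h : C \ {x} ⊆ M.closure S) : x ∈ M.closure S :=
  M.closure_subset_closure_of_subset_closure h (hC.mem_closure_sdiff_singleton_of_mem hx)

lemma r_triangle [M.Finite] (hT : Triangle M X) : r M X = 2 := by
  rw [r_isCircuit hT.isCircuit, hT.2]
  rfl

lemma r_compl_triad [M.Finite] (hD : Triad M X) : r M (M.E \ X) = r M M.E - 1 := by
  have h := r_dual hD.isCocircuit.subset_ground
  rw [r_triangle (triangle_dual_iff.2 hD), hD.2] at h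
  push_cast at h
  omega

lemma exists_eq_insert_pair_of_ncard_eq_three {T : Set α} {a b : α} (hT : T.ncard = 3)
    (ha : a ∈ T) (hb : b ∈ T) (hab : a ≠ b) :
    ∃ x, x ≠ a ∧ x ≠ b ∧ T = {x, a, b} := by
  have hsub : {a, b} ⊆ T := pair_subset ha hb
  obtain ⟨x, hx⟩ := ncard_eq_one.1 (show (T \ {a, b}).ncard = 1 by
    rw [ncard_sdiff hsub, ncard_pair hab, hT])
  have hxT : x ∈ T \ {a, b} := hx ▸ mem_singleton x
  refine ⟨x, fun h => hxT.2 (by simp [h]), fun h => hxT.2 (by simp [h]), ?_⟩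
  rw [← sdiff_union_of_subset hsub, hx, singleton_union]

end Circuits

/-! ### Wheels and whirls -/

section Wheels

variable {M : Matroid α}

lemma isWheelOrWhirl_of_triad_triangle_alternating {m : ℕ} (hm : 2 ≤ m) (f : ℕ → α)
    (hf : InjOn f (Iio (2 * m))) (hE : M.E = f '' Iio (2 * m))
    (hP : ∀ i < 2 * m,
      (i % 2 = 0 → Triad M {f i, f ((i + 1) % (2 * m)), f ((i + 2) % (2 * m))}) ∧
      (i % 2 = 1 → Triangle M {f i, f ((i + 1) % (2 * m)), f ((i + 2) % (2 * m))})) :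
    IsWheelOrWhirl M := by
  set N := 2 * m with hN
  have hsucc : ∀ i, (i + 1) % N < N := fun i => Nat.mod_lt _ (by omega)
  refine ⟨m, fun i => f ((i + 1) % N), hm, ?_, ?_, fun i hi => ?_⟩
  · intro i hi j hj hij
    exact Nat.ModEq.eq_of_lt_of_lt (Nat.ModEq.add_right_cancel' 1 (hf (hsucc i) (hsucc j) hij))
      hi hj
  · rw [hE]
    refine subset_antisymm ?_ (image_subset_iff.2 fun i _ => mem_image_of_mem f (hsucc i))
    rintro _ ⟨i, hi, rfl⟩
    refine ⟨(i + N - 1) % N, Nat.mod_lt _ (by omega), ?_⟩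
    simp only [Nat.mod_add_mod, show i + N - 1 + 1 = i + N by omega, Nat.add_mod_right,
      Nat.mod_eq_of_lt (show i < N from hi)]
  · have hpar : (i + 1) % N % 2 = (i + 1) % 2 := Nat.mod_mod_of_dvd _ ⟨m, rfl⟩
    obtain ⟨hP0, hP1⟩ := hP _ (hsucc i)
    simp only [← hN, Nat.mod_add_mod, add_assoc] at hP0 hP1 ⊢
    exact ⟨fun h => hP1 (by omega), fun h => hP0 (by omega)⟩

lemma IsWheelOrWhirl.of_dual (h : IsWheelOrWhirl M✶) : IsWheelOrWhirl M := by
  obtain ⟨m, f, hm, hf, hE, hP⟩ := h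
  refine isWheelOrWhirl_of_triad_triangle_alternating hm f hf hE fun i hi => ?_
  obtain ⟨hP0, hP1⟩ := hP i hi
  exact ⟨fun h => triangle_dual_iff.1 (hP0 h), fun h => triad_dual_iff.1 (hP1 h)⟩

lemma isWheelOrWhirl_of_ncard_eq_four [M.Finite] (hE : M.E.ncard = 4)
    (h : ∀ S ⊆ M.E, S.ncard = 3 → Triangle M S ∧ Triad M S) : IsWheelOrWhirl M := by
  have := M.ground_finite.to_subtype
  let φ := Finite.equivFinOfCardEq (hE ▸ Nat.card_coe_set_eq M.E)
  let f : ℕ → α := fun i => φ.symm (Fin.ofNat 4 i)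
  have hf : InjOn f (Iio 4) := by
    intro i hi j hj hij
    have := congrArg Fin.val (φ.symm.injective (Subtype.val_injective hij))
    simp only [Fin.val_ofNat] at this
    simp only [mem_Iio] at hi hj
    omega
  have hfE : M.E = f '' Iio 4 := by
    apply subset_antisymm
    · intro x hx
      refine ⟨φ ⟨x, hx⟩, (φ ⟨x, hx⟩).isLt, ?_⟩
      simp [f, Fin.ofNat, Nat.mod_eq_of_lt (φ ⟨x, hx⟩).isLt]
    · rintro _ ⟨i, -, rfl⟩
      exact (φ.symm _).2
  refine ⟨2, f, le_rfl, hf, hfE, fun i hi => ?_⟩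
  have hS : {f i, f ((i + 1) % (2 * 2)), f ((i + 2) % (2 * 2))} ⊆ M.E := by
    rw [hfE]
    rintro _ (rfl | rfl | rfl) <;> exact mem_image_of_mem f (by simp only [mem_Iio]; omega)
  have h3 : ({f i, f ((i + 1) % (2 * 2)), f ((i + 2) % (2 * 2))} : Set α).ncard = 3 := by
    refine ncard_eq_three.2 ⟨_, _, _, ?_, ?_, ?_, rfl⟩ <;>
      exact hf.ne (by simp only [mem_Iio]; omega) (by simp only [mem_Iio]; omega) (by omega)
  exact ⟨fun _ => (h _ hS h3).1, fun _ => (h _ hS h3).2⟩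

end Wheels

/-! ### Connectivity -/

section Connectivity

variable {M : Matroid α} [M.Finite] {C D S S' T X : Set α}

lemma lam_nonneg (M : Matroid α) [M.Finite] (X : Set α) : 0 ≤ lam M X := by
  have := r_ground_le_add_r_compl (M := M) X
  unfold lam
  omega

lemma lam_le_r (M : Matroid α) [M.Finite] (X : Set α) : lam M X ≤ r M X := by
  have := r_mono (M := M) (sdiff_subset : M.E \ X ⊆ M.E)
  unfold lam
  omega

lemma lam_dual (hX : X ⊆ M.E) : lam M✶ X = lam M X := by
  have h1 := r_dual hX
  have h2 := r_dual (sdiff_subset : M.E \ X ⊆ M.E)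
  have h3 := r_dual_ground M
  have h4 := ncard_sdiff_add_ncard_of_subset hX M.ground_finite
  rw [sdiff_sdiff_cancel_left hX] at h2
  unfold lam
  rw [dual_ground, h1, h2, h3]
  omega

lemma lam_le_of_subset_closure (hS : S ⊆ M.E) (hS' : S' ⊆ M.E) (hX : X ⊆ M.E)
    (hcl : X ⊆ M.closure S) (hcocl : X ⊆ M✶.closure S') :
    lam M X ≤ S.ncard + S'.ncard - X.ncard := by
  have := r_dual hX
  have := r_le_of_subset_closure hcl
  have := r_le_of_subset_closure hcocl
  have := r_le_ncard (M := M) (M.set_finite S hS)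
  have := r_le_ncard (M := M✶) (M.set_finite S' hS')
  unfold lam
  omega

lemma ThreeConnected.dual (hM : ThreeConnected M) : ThreeConnected M✶ := by
  intro k hk hk3 X hX
  rw [dual_ground] at hX ⊢
  rw [lam_dual hX]
  exact hM k hk hk3 X hX

lemma ThreeConnected.le_lam (hM : ThreeConnected M) (hX : X ⊆ M.E) {k : ℕ} (hk : k ≤ 2)
    (h1 : k ≤ X.ncard) (h2 : k ≤ (M.E \ X).ncard) : k ≤ lam M X := by
  by_contra hlt
  obtain ⟨j, hj⟩ : ∃ j : ℕ, lam M X = j := ⟨(lam M X).toNat, by simp [lam_nonneg M X]⟩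
  exact hM (j + 1) (by omega) (by omega) X hX ⟨by rw [hj]; push_cast; ring, by omega, by omega⟩

lemma ThreeConnected.indep_of_ncard_le_two (hM : ThreeConnected M) (hE : 4 ≤ M.E.ncard)
    (hX : X ⊆ M.E) (h2 : X.ncard ≤ 2) : M.Indep X := by
  by_contra hd
  have hcompl := ncard_sdiff_add_ncard_of_subset hX M.ground_finite
  have hlam := hM.le_lam hX h2 le_rfl (by omega)
  have := r_lt_ncard_of_not_indep hX hd
  have := lam_le_r M X
  omega

lemma ThreeConnected.three_le_ncard_of_isCircuit (hM : ThreeConnected M) (hE : 4 ≤ M.E.ncard)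
    (hC : M.IsCircuit C) : 3 ≤ C.ncard := by
  by_contra h
  exact hC.not_indep (hM.indep_of_ncard_le_two hE hC.subset_ground (by omega))

lemma ThreeConnected.triangle_of_isCircuit_subset (hM : ThreeConnected M) (hE : 4 ≤ M.E.ncard)
    (hC : M.IsCircuit C) (hCX : C ⊆ X) (hX : X.ncard = 3) : Triangle M X := by
  have h3 := hM.three_le_ncard_of_isCircuit hE hC
  obtain rfl := eq_of_subset_of_ncard_le hCX (by omega) (finite_of_ncard_pos (by omega))
  exact ⟨circuit_iff_isCircuit.2 hC, hX⟩

lemma ThreeConnected.triangle_of_not_indep (hM : ThreeConnected M) (hE : 4 ≤ M.E.ncard)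
    (hX : X ⊆ M.E) (h3 : X.ncard = 3) (hd : ¬ M.Indep X) : Triangle M X := by
  obtain ⟨C, hCX, hC⟩ := Dep.exists_isCircuit_subset ⟨hd, hX⟩
  exact hM.triangle_of_isCircuit_subset hE hC hCX h3

lemma ThreeConnected.triangle_of_r_ground_le_two (hM : ThreeConnected M) (hE : 4 ≤ M.E.ncard)
    (hr : r M M.E ≤ 2) (hS : S ⊆ M.E) (h3 : S.ncard = 3) : Triangle M S :=
  hM.triangle_of_not_indep hE hS h3 fun hI => by
    have := r_eq_ncard_of_indep hI
    have := r_mono (M := M) hS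
    omega

lemma ThreeConnected.not_triad_of_triangle (hM : ThreeConnected M) (hW : ¬ IsWheelOrWhirl M)
    (hT : Triangle M X) : ¬ Triad M X := by
  intro hD
  have hX := hT.isCircuit.subset_ground
  have hX3 := hT.2
  have hrX := r_triangle hT
  have hrc := r_compl_triad hD
  have hcompl := ncard_sdiff_add_ncard_of_subset hX M.ground_finite
  have hrc_le := r_le_ncard (M := M) (M.ground_finite.subset (sdiff_subset : M.E \ X ⊆ M.E))
  have := r_mono (M := M) hX
  have hsmall : (M.E \ X).ncard ≤ 1 := by
    by_contra h
    have := hM.le_lam hX (k := 2) le_rfl (by omega) (by omega)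
    unfold lam at this
    omega
  -- Hence `|E| = 4` and `r(M) = 2`: `M` is `U_{2,4}`, the rank-2 whirl.
  have hE4 : M.E.ncard = 4 := by omega
  have hrE : r M M.E = 2 := by omega
  refine hW (isWheelOrWhirl_of_ncard_eq_four hE4 fun S hS h3 => ⟨?_, ?_⟩)
  · exact hM.triangle_of_r_ground_le_two (by omega) (by omega) hS h3
  · have := r_dual_ground M
    exact hM.dual.triangle_of_r_ground_le_two (by simp [hE4]) (by simp only [dual_ground]; omega)
      hS h3

lemma ThreeConnected.not_triad_of_r_ground_le_two (hM : ThreeConnected M) (hE : M.E.ncard = 5)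
    (hr : r M M.E ≤ 2) (hD : Triad M D) : False := by
  have hDE := hD.isCocircuit.subset_ground
  have hc := ncard_sdiff_add_ncard_of_subset hDE M.ground_finite
  rw [hD.2] at hc
  have := r_eq_ncard_of_indep
    (hM.indep_of_ncard_le_two (by omega) (sdiff_subset : M.E \ D ⊆ M.E) (by omega))
  have := r_compl_triad hD
  omega

lemma ThreeConnected.not_triangle_triad_of_ncard_eq_five (hM : ThreeConnected M)
    (hE : M.E.ncard = 5) (hT : Triangle M T) (hD : Triad M D) : False := by
  have := r_dual_ground M
  by_cases hr : r M M.E ≤ 2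
  · exact hM.not_triad_of_r_ground_le_two hE hr hD
  · exact hM.dual.not_triad_of_r_ground_le_two hE (by simp only [dual_ground]; omega)
      (triad_dual_iff.2 hT)

/-- `λ(X) ≤ 1` rules out a 2-separation, so at most one element `w` lies outside `X`; it is not
a coloop, so it lies in the closure of any set spanning `X`. -/
lemma ThreeConnected.eq_ground_or_exists_isCircuit (hM : ThreeConnected M)
    (hE : 4 ≤ M.E.ncard) (hX : X ⊆ M.E) (hX2 : 2 ≤ X.ncard) (hSX : S ⊆ X) (hS'X : S' ⊆ X)
    (hcl : X ⊆ M.closure S) (hcocl : X ⊆ M✶.closure S')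
    (hcard : S.ncard + S'.ncard ≤ X.ncard + 1) :
    M.E = X ∨ ∃ w ∉ X, ∃ C ⊆ insert w S, M.IsCircuit C ∧ w ∈ C := by
  have hlam := lam_le_of_subset_closure (hSX.trans hX) (hS'X.trans hX) hX hcl hcocl
  have hc := ncard_sdiff_add_ncard_of_subset hX M.ground_finite
  have hsmall : (M.E \ X).ncard ≤ 1 := by
    by_contra h
    have := hM.le_lam hX (k := 2) le_rfl hX2 (by omega)
    omega
  rcases Nat.le_one_iff_eq_zero_or_eq_one.1 hsmall with h0 | h1
  · left
    rw [ncard_eq_zero (M.ground_finite.subset sdiff_subset), sdiff_eq_empty] at h0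
    exact subset_antisymm h0 hX
  · right
    obtain ⟨w, hw⟩ := ncard_eq_one.1 h1
    have hwX : w ∈ M.E \ X := hw ▸ mem_singleton w
    have hXw : X = M.E \ {w} := by rw [← hw, sdiff_sdiff_cancel_left hX]
    have hcoind : M.Coindep {w} :=
      hM.dual.indep_of_ncard_le_two (by simpa using hE) (by simpa using hwX.1) (by simp)
    have hwS : w ∈ M.closure S := by
      refine M.closure_subset_closure_of_subset_closure hcl ?_
      rw [hXw, hcoind.compl_spanning.closure_eq]
      exact hwX.1
    exact ⟨w, hwX.2, exists_isCircuit_of_mem_closure hwS fun h => hwX.2 (hSX h)⟩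

end Connectivity

/-! ### Fans -/

def prepend (x : α) (e : ℕ → α) : ℕ → α
  | 0 => x
  | i + 1 => e i

lemma image_odd_subset_image {e : ℕ → α} {k n : ℕ} (hk : 2 * k ≤ n) :
    (fun j => e (2 * j + 1)) '' Iio k ⊆ e '' Iio n :=
  image_subset_iff.2 fun j hj => mem_image_of_mem e (by simp only [mem_Iio] at hj ⊢; omega)

lemma image_even_subset_image {e : ℕ → α} {k n : ℕ} (hk : 2 * k ≤ n) :
    (fun j => e (2 * j)) '' Iio k ⊆ e '' Iio n :=
  image_subset_iff.2 fun j hj => mem_image_of_mem e (by simp only [mem_Iio] at hj ⊢; omega)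

lemma apply_mem_image_odd {e : ℕ → α} {i k : ℕ} (hi : i % 2 = 1) (hik : i < 2 * k) :
    e i ∈ (fun j => e (2 * j + 1)) '' Iio k :=
  ⟨i / 2, by simp only [mem_Iio]; omega, by simp only; congr 1; omega⟩

lemma apply_mem_image_even {e : ℕ → α} {i k : ℕ} (hi : i % 2 = 0) (hik : i < 2 * k) :
    e i ∈ (fun j => e (2 * j)) '' Iio k :=
  ⟨i / 2, by simp only [mem_Iio]; omega, by simp only; congr 1; omega⟩

namespace FanOrd

variable {M : Matroid α} {n : ℕ} {e : ℕ → α} {i a b c : ℕ} {x : α}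

lemma apply_eq_apply_iff (hord : FanOrd M n e) (ha : a < n) (hb : b < n) : e a = e b ↔ a = b :=
  hord.2.1.eq_iff ha hb

lemma apply_mem_ground (hord : FanOrd M n e) (hi : i < n) : e i ∈ M.E :=
  hord.2.2.1 i hi

lemma image_subset_ground (hord : FanOrd M n e) : e '' Iio n ⊆ M.E :=
  image_subset_iff.2 fun _ hi => hord.apply_mem_ground hi

lemma ncard_image (hord : FanOrd M n e) : (e '' Iio n).ncard = n := by
  rw [hord.2.1.ncard_image, ncard_Iio_nat]

lemma le_ncard_ground [M.Finite] (hord : FanOrd M n e) : n ≤ M.E.ncard :=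
  hord.ncard_image ▸ ncard_le_ncard hord.image_subset_ground M.ground_finite

lemma ncard_triple (hord : FanOrd M n e) (ha : a < n) (hb : b < n) (hc : c < n) (hab : a ≠ b)
    (hac : a ≠ c) (hbc : b ≠ c) : ({e a, e b, e c} : Set α).ncard = 3 :=
  ncard_eq_three.2 ⟨_, _, _, hord.2.1.ne ha hb hab, hord.2.1.ne ha hc hac,
    hord.2.1.ne hb hc hbc, rfl⟩

lemma triad_or_triangle (hord : FanOrd M n e) (h0 : Triad M (tri e 0)) (hi : i + 2 < n) :
    (i % 2 = 0 → Triad M (tri e i)) ∧ (i % 2 = 1 → Triangle M (tri e i)) := by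
  induction i with
  | zero => exact ⟨fun _ => h0, fun h => absurd h (by decide)⟩
  | succ k ih =>
    obtain ⟨ih0, ih1⟩ := ih (by omega)
    obtain ⟨h1, h2⟩ := hord.2.2.2.2 k (by omega)
    exact ⟨fun h => h1 (ih1 (by omega)), fun h => h2 (ih0 (by omega))⟩

lemma triad_of_even (hord : FanOrd M n e) (h0 : Triad M (tri e 0)) (hi : i + 2 < n)
    (he : i % 2 = 0) : Triad M (tri e i) :=
  (hord.triad_or_triangle h0 hi).1 he

lemma triangle_of_odd (hord : FanOrd M n e) (h0 : Triad M (tri e 0)) (hi : i + 2 < n)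
    (ho : i % 2 = 1) : Triangle M (tri e i) :=
  (hord.triad_or_triangle h0 hi).2 ho

lemma zero_notMem_tri (hord : FanOrd M n e) (hi : 1 ≤ i) (hin : i + 2 < n) : e 0 ∉ tri e i := by
  simp (disch := omega) only [tri, mem_insert_iff, mem_singleton_iff, hord.apply_eq_apply_iff]
  omega

lemma dual (hord : FanOrd M n e) : FanOrd M✶ n e := by
  obtain ⟨h3, hinj, hE, h0, halt⟩ := hord
  refine ⟨h3, hinj, hE, h0.symm.imp id triad_dual_iff.2, fun i hi => ?_⟩
  obtain ⟨h1, h2⟩ := halt i hi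
  exact ⟨fun h => triad_dual_iff.2 (h2 h), fun h => h1 (triad_dual_iff.1 h)⟩

lemma prepend (hord : FanOrd M n e) (h0 : Triad M (tri e 0)) (hx : x ∈ M.E)
    (hxF : x ∉ e '' Iio n) (hT : Triangle M {x, e 0, e 1}) (hTd : ¬ Triad M {x, e 0, e 1}) :
    FanOrd M (n + 1) (DetPairs.prepend x e) := by
  have hne : ∀ j < n, e j ≠ x := fun j hj h => hxF ⟨j, hj, h⟩
  refine ⟨by have := hord.1; omega, ?_, ?_, Or.inl hT, ?_⟩
  · rintro (_ | i) hi (_ | j) hj h <;> simp only [mem_Iio] at hi hj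
    · rfl
    · exact absurd h.symm (hne j (by omega))
    · exact absurd h (hne i (by omega))
    · rw [(hord.apply_eq_apply_iff (by omega) (by omega)).1 h]
  · rintro (_ | i) hi
    · exact hx
    · exact hord.apply_mem_ground (by omega)
  · rintro (_ | i) hi
    · exact ⟨fun _ => h0, fun h => absurd h hTd⟩
    · exact hord.2.2.2.2 i (by omega)

lemma image_subset_image_prepend : e '' Iio n ⊆ DetPairs.prepend x e '' Iio (n + 1) := by
  rintro _ ⟨i, hi, rfl⟩
  exact ⟨i + 1, by simp_all, rfl⟩

lemma image_comp_swap (hn : 3 ≤ n) : (e ∘ Equiv.swap 1 2) '' Iio n = e '' Iio n := by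
  rw [image_comp]
  congr 1
  ext i
  simp only [Equiv.image_eq_preimage_symm, Equiv.symm_swap, mem_preimage, mem_Iio,
    Equiv.swap_apply_def]
  split_ifs <;> omega

lemma tri_comp_swap_zero : tri (e ∘ Equiv.swap 1 2) 0 = tri e 0 := by
  simp [tri, Equiv.swap_apply_of_ne_of_ne, pair_comm]

/-- Up to length `4` the fan conditions only involve `tri e 0` and `tri e 1`, which are unchanged
as sets when `e 1` and `e 2` are swapped. -/
lemma comp_swap (hord : FanOrd M n e) (hn : n ≤ 4) : FanOrd M n (e ∘ Equiv.swap 1 2) := by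
  have hmaps : MapsTo (Equiv.swap 1 2) (Iio n) (Iio n) := by
    intro i hi
    have := hord.1
    simp only [mem_Iio, Equiv.swap_apply_def] at hi ⊢
    split_ifs <;> omega
  refine ⟨hord.1, hord.2.1.comp (Equiv.injective _).injOn hmaps,
    fun i hi => hord.apply_mem_ground (hmaps hi), tri_comp_swap_zero ▸ hord.2.2.2.1,
    fun i hi => ?_⟩
  obtain rfl : i = 0 := by omega
  have htri1 : tri (e ∘ Equiv.swap 1 2) 1 = tri e 1 := by
    simp [tri, Equiv.swap_apply_of_ne_of_ne, insert_comm]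
  rw [tri_comp_swap_zero, htri1]
  exact hord.2.2.2.2 0 hi

end FanOrd

lemma IsFan.dual {M : Matroid α} {F : Set α} (h : IsFan M F) : IsFan M✶ F := by
  rcases h with ⟨hF, h2⟩ | ⟨n, e, hord, rfl⟩
  · exact Or.inl ⟨hF, h2⟩
  · exact Or.inr ⟨n, e, hord.dual, rfl⟩

lemma MaximalFan.dual {M : Matroid α} {F : Set α} (h : MaximalFan M F) : MaximalFan M✶ F :=
  ⟨h.1.dual, fun F' hF' hFF' => h.2 F' (by simpa using hF'.dual) hFF'⟩

/-! ### Fans closed up by a triangle -/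

namespace FanOrd

variable {M : Matroid α} {n m k i : ℕ} {e : ℕ → α}

lemma mem_closure_image_odd (hord : FanOrd M n e) (h0 : Triad M (tri e 0)) (hk : 2 * k ≤ n)
    (hi1 : 1 ≤ i) (hi : i < 2 * k) : e i ∈ M.closure ((fun j => e (2 * j + 1)) '' Iio k) := by
  have hodd : ∀ j, j % 2 = 1 → j < 2 * k →
      e j ∈ M.closure ((fun j => e (2 * j + 1)) '' Iio k) := fun j hj hjk =>
    M.subset_closure _ ((image_odd_subset_image hk).trans hord.image_subset_ground)
      (apply_mem_image_odd hj hjk)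
  obtain ⟨j, rfl⟩ : ∃ j, i = j + 1 := ⟨i - 1, by omega⟩
  rcases Nat.mod_two_eq_zero_or_one j with hj | hj
  · exact hodd _ (by omega) hi
  · refine (hord.triangle_of_odd h0 (by omega) hj).isCircuit.mem_closure_of_sdiff_subset_closure
      (by simp [tri]) fun y ⟨hy, hyne⟩ => ?_
    simp only [tri, mem_insert_iff, mem_singleton_iff] at hy hyne
    rcases hy with rfl | rfl | rfl
    exacts [hodd j hj (by omega), absurd rfl hyne, hodd (j + 2) (by omega) (by omega)]

lemma mem_dual_closure_image_even (hord : FanOrd M n e) (h0 : Triad M (tri e 0))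
    (hk : 2 * k ≤ n) (hi : i + 1 < 2 * k) :
    e i ∈ M✶.closure ((fun j => e (2 * j)) '' Iio k) := by
  have hev : ∀ j, j % 2 = 0 → j < 2 * k →
      e j ∈ M✶.closure ((fun j => e (2 * j)) '' Iio k) :=
    fun j hj hjk => M✶.subset_closure _
      ((image_even_subset_image hk).trans hord.image_subset_ground) (apply_mem_image_even hj hjk)
  rcases Nat.mod_two_eq_zero_or_one i with hi2 | hi2
  · exact hev i hi2 (by omega)
  · obtain ⟨j, rfl⟩ : ∃ j, i = j + 1 := ⟨i - 1, by omega⟩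
    refine (hord.triad_of_even h0 (i := j) (by omega) (by omega)).isCocircuit.isCircuit
      |>.mem_closure_of_sdiff_subset_closure (by simp [tri]) fun y ⟨hy, hyne⟩ => ?_
    simp only [tri, mem_insert_iff, mem_singleton_iff] at hy hyne
    rcases hy with rfl | rfl | rfl
    exacts [hev j (by omega) (by omega), absurd rfl hyne, hev (j + 2) (by omega) (by omega)]

lemma ncard_image_odd (hord : FanOrd M (2 * m) e) :
    ((fun j => e (2 * j + 1)) '' Iio m).ncard = m := by
  refine (InjOn.ncard_image fun a ha b hb h => ?_).trans (ncard_Iio_nat m)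
  simp only [mem_Iio] at ha hb
  have := (hord.apply_eq_apply_iff (by omega) (by omega)).1 h
  omega

lemma inter_subset_of_inter_subset_image_odd (hord : FanOrd M (2 * m) e)
    (h0 : Triad M (tri e 0)) {C : Set α} (hC : M.IsCircuit C)
    (hCO : C ∩ e '' Iio (2 * m) ⊆ (fun j => e (2 * j + 1)) '' Iio m) :
    C ∩ e '' Iio (2 * m) ⊆ {e (2 * m - 1)} := by
  intro y hy
  obtain ⟨j, hj, rfl⟩ := hCO hy
  simp only [mem_Iio] at hj hy ⊢
  by_contra hne
  have hjm : 2 * j + 3 < 2 * m := by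
    by_contra h
    exact hne (by rw [show 2 * j + 1 = 2 * m - 1 by omega, mem_singleton_iff])
  have htd := hord.triad_of_even h0 (i := 2 * j) (by omega) (by omega)
  refine hC.notMem_of_inter_subset htd.isCocircuit (x := e (2 * j + 1)) (by simp [tri]) ?_ hy.1
  rintro z ⟨hzC, hzD⟩
  simp only [tri, mem_insert_iff, mem_singleton_iff] at hzD ⊢
  have hzF : z ∈ e '' Iio (2 * m) := by
    rcases hzD with rfl | rfl | rfl <;> exact mem_image_of_mem e (by simp only [mem_Iio]; omega)
  obtain ⟨l, hl, rfl⟩ := hCO ⟨hzC, hzF⟩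
  simp only [mem_Iio] at hl
  simp (disch := omega) only [hord.apply_eq_apply_iff] at hzD ⊢
  omega

lemma image_subset_closure_image_odd (hord : FanOrd M (2 * m) e) (h0 : Triad M (tri e 0))
    (hT : Triangle M {e (2 * m - 1), e 0, e 1}) :
    e '' Iio (2 * m) ⊆ M.closure ((fun j => e (2 * j + 1)) '' Iio m) := by
  have h3 := hord.1
  rintro _ ⟨i, hi, rfl⟩
  simp only [mem_Iio] at hi
  obtain rfl | hi1 := Nat.eq_zero_or_pos i
  · refine hT.isCircuit.mem_closure_of_sdiff_subset_closure (by simp) fun y ⟨hy, hy0⟩ =>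
      M.subset_closure _ ((image_odd_subset_image le_rfl).trans hord.image_subset_ground) ?_
    simp only [mem_insert_iff, mem_singleton_iff] at hy hy0
    rcases hy with rfl | rfl | rfl
    exacts [apply_mem_image_odd (by omega) (by omega), absurd rfl hy0,
      apply_mem_image_odd (by omega) (by omega)]
  · exact hord.mem_closure_image_odd h0 le_rfl hi1 hi

lemma image_subset_dual_closure_image_even (hord : FanOrd M (2 * m) e)
    (h0 : Triad M (tri e 0)) :
    e '' Iio (2 * m) ⊆ M✶.closure (insert (e (2 * m - 1)) ((fun j => e (2 * j)) '' Iio m)) := by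
  have h3 := hord.1
  rintro _ ⟨i, hi, rfl⟩
  simp only [mem_Iio] at hi
  by_cases hi' : i = 2 * m - 1
  · refine M✶.subset_closure _ (insert_subset (hord.apply_mem_ground (by omega))
      ((image_even_subset_image le_rfl).trans hord.image_subset_ground)) ?_
    exact hi' ▸ mem_insert _ _
  · exact M✶.closure_subset_closure (subset_insert _ _)
      (hord.mem_dual_closure_image_even h0 le_rfl (by omega))

variable [M.Finite]

lemma indep_image_odd (hM : ThreeConnected M) (hord : FanOrd M (2 * m) e)
    (h0 : Triad M (tri e 0)) : M.Indep ((fun j => e (2 * j + 1)) '' Iio m) := by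
  have hOF := image_odd_subset_image (e := e) (le_refl (2 * m))
  by_contra hd
  obtain ⟨C, hCO, hC⟩ :=
    Dep.exists_isCircuit_subset ⟨hd, hOF.trans hord.image_subset_ground⟩
  have hC1 : C ⊆ {e (2 * m - 1)} := fun y hy =>
    hord.inter_subset_of_inter_subset_image_odd h0 hC (inter_subset_left.trans hCO)
      ⟨hy, hOF (hCO hy)⟩
  have := ncard_le_ncard hC1
  have := hM.three_le_ncard_of_isCircuit
    (by have := hord.1; have := hord.le_ncard_ground; omega) hC
  rw [ncard_singleton] at *
  omega

lemma eq_ground_of_triangle (hM : ThreeConnected M) (hord : FanOrd M (2 * m) e)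
    (h0 : Triad M (tri e 0)) (hT : Triangle M {e (2 * m - 1), e 0, e 1}) :
    M.E = e '' Iio (2 * m) := by
  set F := e '' Iio (2 * m)
  set O := (fun j => e (2 * j + 1)) '' Iio m
  set V := insert (e (2 * m - 1)) ((fun j => e (2 * j)) '' Iio m)
  have h3 := hord.1
  have hE4 : 4 ≤ M.E.ncard := by have := hord.le_ncard_ground; omega
  have hOF : O ⊆ F := image_odd_subset_image le_rfl
  have hVF : V ⊆ F := insert_subset (mem_image_of_mem e (by simp only [mem_Iio]; omega))
    (image_even_subset_image le_rfl)
  have hVcard : V.ncard ≤ m + 1 := (ncard_insert_le _ _).trans (by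
    have := ncard_image_le (f := fun j => e (2 * j)) (finite_Iio m)
    rw [ncard_Iio_nat] at this
    omega)
  obtain hEF | ⟨w, hwF, C, hCw, hC, hwC⟩ := hM.eq_ground_or_exists_isCircuit hE4
    hord.image_subset_ground (by rw [hord.ncard_image]; omega) hOF hVF
    (hord.image_subset_closure_image_odd h0 hT) (hord.image_subset_dual_closure_image_even h0)
    (by rw [hord.ncard_image_odd, hord.ncard_image]; omega)
  · exact hEF
  have hCO : C ∩ F ⊆ O := fun z hz => by
    rcases hCw hz.1 with rfl | h
    · exact absurd hz.2 hwF
    · exact h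
  have hC2 : C ⊆ {w, e (2 * m - 1)} := by
    intro z hz
    rcases hCw hz with rfl | h
    · exact mem_insert _ _
    · exact mem_insert_of_mem _
        (hord.inter_subset_of_inter_subset_image_odd h0 hC hCO ⟨hz, hOF h⟩)
  have := (ncard_le_ncard hC2).trans (ncard_insert_le w {e (2 * m - 1)})
  have := hM.three_le_ncard_of_isCircuit hE4 hC
  rw [ncard_singleton] at *
  omega

lemma triad_of_eq_ground (hM : ThreeConnected M) (hord : FanOrd M (2 * m) e)
    (h0 : Triad M (tri e 0)) (hEF : M.E = e '' Iio (2 * m)) :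
    Triad M {e (2 * m - 2), e (2 * m - 1), e 0} := by
  set D : Set α := {e (2 * m - 2), e (2 * m - 1), e 0}
  have h3 := hord.1
  have hE4 : 4 ≤ M.E.ncard := by have := hord.le_ncard_ground; omega
  have hDE : D ⊆ M.E := by
    rintro _ (rfl | rfl | rfl) <;> exact hord.apply_mem_ground (by omega)
  have hD3 : D.ncard = 3 :=
    hord.ncard_triple (by omega) (by omega) (by omega) (by omega) (by omega) (by omega)
  have hrE := r_mono (M := M) ((image_odd_subset_image (e := e) (le_refl (2 * m))).trans
    hord.image_subset_ground)
  rw [r_eq_ncard_of_indep (hord.indep_image_odd hM h0), hord.ncard_image_odd] at hrE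
  have hcl : M.E \ D ⊆ M.closure ((fun j => e (2 * j + 1)) '' Iio (m - 1)) := by
    rintro y ⟨hyE, hyD⟩
    rw [hEF] at hyE
    obtain ⟨i, hi, rfl⟩ := hyE
    simp only [mem_Iio] at hi
    simp (disch := omega) only [D, mem_insert_iff, mem_singleton_iff,
      hord.apply_eq_apply_iff] at hyD
    exact hord.mem_closure_image_odd h0 (k := m - 1) (by omega) (by omega) (by omega)
  have hrc : r M (M.E \ D) ≤ ((m - 1 : ℕ) : ℤ) := by
    have h1 := r_le_of_subset_closure hcl
    have h2 := r_le_ncard (M := M) (toFinite ((fun j => e (2 * j + 1)) '' Iio (m - 1)))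
    have h3 := ncard_image_le (f := fun j => e (2 * j + 1)) (finite_Iio (m - 1))
    rw [ncard_Iio_nat] at h3
    omega
  refine hM.dual.triangle_of_not_indep (by simpa using hE4) hDE hD3 fun hI => ?_
  have := r_eq_ncard_of_indep hI
  have := r_dual hDE
  omega

theorem isWheelOrWhirl_of_triangle (hM : ThreeConnected M) (hord : FanOrd M (2 * m) e)
    (h0 : Triad M (tri e 0)) (hT : Triangle M {e (2 * m - 1), e 0, e 1}) :
    IsWheelOrWhirl M := by
  have h3 := hord.1
  have hEF := hord.eq_ground_of_triangle hM h0 hT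
  have hD := hord.triad_of_eq_ground hM h0 hEF
  refine isWheelOrWhirl_of_triad_triangle_alternating (by omega) e hord.2.1 hEF fun i hi => ?_
  rcases lt_or_ge (i + 2) (2 * m) with hi2 | hi2
  · rw [Nat.mod_eq_of_lt (by omega : i + 1 < 2 * m), Nat.mod_eq_of_lt hi2]
    exact hord.triad_or_triangle h0 hi2
  obtain rfl | rfl : i = 2 * m - 2 ∨ i = 2 * m - 1 := by omega
  · rw [show 2 * m - 2 + 1 = 2 * m - 1 by omega, show 2 * m - 2 + 2 = 2 * m by omega,
      Nat.mod_self, Nat.mod_eq_of_lt (by omega : 2 * m - 1 < 2 * m)]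
    exact ⟨fun _ => hD, fun h => by omega⟩
  · rw [show 2 * m - 1 + 1 = 2 * m by omega, show 2 * m - 1 + 2 = 2 * m + 1 by omega,
      Nat.mod_self, Nat.add_mod_left, Nat.mod_eq_of_lt (by omega : 1 < 2 * m)]
    exact ⟨fun h => by omega, fun _ => hT⟩

end FanOrd

/-! ### Ends of maximal fans -/

namespace FanOrd

variable {M : Matroid α} {n : ℕ} {e : ℕ → α} {T : Set α}

lemma image_five_subset_closure (hord : FanOrd M n e) (hn : 5 ≤ n) (h0 : Triad M (tri e 0))
    (hT : Triangle M {e 4, e 0, e 2}) : e '' Iio 5 ⊆ M.closure {e 0, e 1, e 3} := by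
  set S : Set α := {e 0, e 1, e 3}
  have hS : ∀ {y}, y ∈ S → y ∈ M.closure S := fun hy =>
    M.subset_closure S (by rintro _ (rfl | rfl | rfl) <;> exact hord.apply_mem_ground (by omega))
      hy
  have h2cl : e 2 ∈ M.closure S :=
    (hord.triangle_of_odd h0 (i := 1) (by omega) rfl).isCircuit.mem_closure_of_sdiff_subset_closure
      (by simp [tri]) fun y ⟨hy, hy2⟩ => by
        simp only [tri, mem_insert_iff, mem_singleton_iff] at hy hy2
        rcases hy with rfl | rfl | rfl
        exacts [hS (by simp [S]), absurd rfl hy2, hS (by simp [S])]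
  rintro _ ⟨i, hi, rfl⟩
  simp only [mem_Iio] at hi
  interval_cases i
  · exact hS (by simp [S])
  · exact hS (by simp [S])
  · exact h2cl
  · exact hS (by simp [S])
  · refine hT.isCircuit.mem_closure_of_sdiff_subset_closure (by simp) fun y ⟨hy, hy4⟩ => ?_
    simp only [mem_insert_iff, mem_singleton_iff] at hy hy4
    rcases hy with rfl | rfl | rfl
    exacts [absurd rfl hy4, hS (by simp [S]), h2cl]

lemma image_five_subset_dual_closure (hord : FanOrd M n e) (hn : 5 ≤ n)
    (h0 : Triad M (tri e 0)) : e '' Iio 5 ⊆ M✶.closure {e 4, e 0, e 2} := by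
  set S : Set α := {e 4, e 0, e 2}
  have hS : ∀ {y}, y ∈ S → y ∈ M✶.closure S := fun hy =>
    M✶.subset_closure S (by rintro _ (rfl | rfl | rfl) <;> exact hord.apply_mem_ground (by omega))
      hy
  have hmid : ∀ k, k % 2 = 0 → k ≤ 2 → e k ∈ S → e (k + 2) ∈ S →
      e (k + 1) ∈ M✶.closure S :=
    fun k hk hk2 hkS hk2S =>
      (hord.triad_of_even h0 (by omega) hk).isCocircuit.isCircuit
        |>.mem_closure_of_sdiff_subset_closure (by simp [tri]) fun y ⟨hy, hy1⟩ => by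
          simp only [tri, mem_insert_iff, mem_singleton_iff] at hy hy1
          rcases hy with rfl | rfl | rfl
          exacts [hS hkS, absurd rfl hy1, hS hk2S]
  rintro _ ⟨i, hi, rfl⟩
  simp only [mem_Iio] at hi
  interval_cases i
  · exact hS (by simp [S])
  · exact hmid 0 rfl (by omega) (by simp [S]) (by simp [S])
  · exact hS (by simp [S])
  · exact hmid 2 rfl le_rfl (by simp [S]) (by simp [S])
  · exact hS (by simp [S])

variable [M.Finite]

lemma triangle_tri_zero_of_triangle_three_zero_two (hM : ThreeConnected M)
    (hord : FanOrd M n e) (hn : 4 ≤ n) (h0 : Triad M (tri e 0))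
    (hT : Triangle M {e 3, e 0, e 2}) : Triangle M (tri e 0) := by
  have h1 := hord.triangle_of_odd h0 (i := 1) (by omega) rfl
  have hne : ({e 3, e 0, e 2} : Set α) ≠ tri e 1 := fun h =>
    hord.zero_notMem_tri le_rfl (by omega) (h ▸ by simp)
  obtain ⟨C, hCsub, hC⟩ := hT.isCircuit.elimination h1.isCircuit hne (e 3)
  refine hM.triangle_of_isCircuit_subset (by have := hord.le_ncard_ground; omega) hC
    (fun y hy => ?_) h0.2
  obtain ⟨hy, hy3⟩ := hCsub hy
  simp only [tri, mem_union, mem_insert_iff, mem_singleton_iff] at hy hy3 ⊢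
  tauto

lemma exists_triangle_zero_one_of_length_five (hM : ThreeConnected M) (hord : FanOrd M 5 e)
    (h0 : Triad M (tri e 0)) (hT : Triangle M {e 4, e 0, e 2}) :
    ∃ w ∉ e '' Iio 5, Triangle M {w, e 0, e 1} := by
  have hE4 : 4 ≤ M.E.ncard := by have := hord.le_ncard_ground; omega
  have h2 := hord.triad_of_even h0 (i := 2) (by omega) rfl
  have hSF : ({e 0, e 1, e 3} : Set α) ⊆ e '' Iio 5 := by
    rintro _ (rfl | rfl | rfl) <;> exact mem_image_of_mem e (by simp)
  have hS'F : ({e 4, e 0, e 2} : Set α) ⊆ e '' Iio 5 := by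
    rintro _ (rfl | rfl | rfl) <;> exact mem_image_of_mem e (by simp)
  obtain hE | ⟨w, hwF, C, hCS, hC, hwC⟩ := hM.eq_ground_or_exists_isCircuit hE4
    hord.image_subset_ground (by rw [hord.ncard_image]; omega) hSF hS'F
    (hord.image_five_subset_closure le_rfl h0 hT) (hord.image_five_subset_dual_closure le_rfl h0)
    (by rw [hord.ncard_triple (by omega) (by omega) (by omega) (by omega) (by omega) (by omega),
      hT.2, hord.ncard_image])
  · exact (hM.not_triangle_triad_of_ncard_eq_five (by rw [hE, hord.ncard_image]) hT h0).elim
  have hw : ∀ i < 5, w ≠ e i := fun i hi h => hwF (h ▸ mem_image_of_mem e hi)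
  have he3 : e 3 ∉ C := by
    refine hC.notMem_of_inter_subset h2.isCocircuit (by simp [tri]) fun y ⟨hyC, hyD⟩ => ?_
    have hy := hCS hyC
    simp only [tri, mem_insert_iff, mem_singleton_iff] at hy hyD ⊢
    rcases hy with rfl | rfl | rfl | rfl
    · rcases hyD with h | h | h <;> exact absurd h (hw _ (by omega))
    all_goals simp (disch := omega) only [hord.apply_eq_apply_iff] at hyD ⊢ <;> omega
  refine ⟨w, hwF, hM.triangle_of_isCircuit_subset hE4 hC (fun y hy => ?_)
    (ncard_eq_three.2 ⟨_, _, _, hw 0 (by omega), hw 1 (by omega),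
      hord.2.1.ne (by simp) (by simp) (by omega), rfl⟩)⟩
  have := hCS hy
  simp only [mem_insert_iff, mem_singleton_iff] at this ⊢
  rcases this with rfl | rfl | rfl | rfl
  exacts [Or.inl rfl, Or.inr (Or.inl rfl), Or.inr (Or.inr rfl), absurd hy he3]

lemma exists_isCircuit_of_triangle_four_zero_two (hM : ThreeConnected M) (hord : FanOrd M n e)
    (hn : 5 ≤ n) (h0 : Triad M (tri e 0)) (hT : Triangle M {e 4, e 0, e 2}) :
    ∃ C ⊆ ({e 0, e 1, e 3, e 4} : Set α), M.IsCircuit C ∧ e 3 ∈ C := by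
  have h1 := hord.triangle_of_odd h0 (i := 1) (by omega) rfl
  have h2 := hord.triad_of_even h0 (i := 2) (by omega) rfl
  have hne : ({e 4, e 0, e 2} : Set α) ≠ tri e 1 := fun h =>
    hord.zero_notMem_tri le_rfl (by omega) (h ▸ by simp)
  obtain ⟨C, hCsub, hC⟩ := hT.isCircuit.elimination h1.isCircuit hne (e 2)
  have hC' : C ⊆ {e 0, e 1, e 3, e 4} := fun y hy => by
    obtain ⟨hy, hy2⟩ := hCsub hy
    simp only [tri, mem_union, mem_insert_iff, mem_singleton_iff] at hy hy2 ⊢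
    tauto
  refine ⟨C, hC', hC, by_contra fun h3C => ?_⟩
  have he4 : e 4 ∉ C := by
    refine hC.notMem_of_inter_subset h2.isCocircuit (by simp [tri]) fun y ⟨hyC, hyD⟩ => ?_
    have hy := hC' hyC
    simp only [tri, mem_insert_iff, mem_singleton_iff] at hy hyD ⊢
    rcases hy with rfl | rfl | rfl | rfl
    · simp (disch := omega) only [hord.apply_eq_apply_iff] at hyD; omega
    · simp (disch := omega) only [hord.apply_eq_apply_iff] at hyD; omega
    · exact absurd hyC h3C
    · rfl
  have hC01 : C ⊆ {e 0, e 1} := fun y hy => by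
    have := hC' hy
    simp only [mem_insert_iff, mem_singleton_iff] at this ⊢
    rcases this with rfl | rfl | rfl | rfl
    exacts [Or.inl rfl, Or.inr rfl, absurd hy h3C, absurd hy he4]
  have := (ncard_le_ncard hC01).trans (ncard_insert_le _ _)
  have := hM.three_le_ncard_of_isCircuit (by have := hord.le_ncard_ground; omega) hC
  simp only [ncard_singleton] at *
  omega

lemma triangle_five_zero_one_of_triangle_four_zero_two (hM : ThreeConnected M)
    (hord : FanOrd M n e) (hn : 6 ≤ n) (h0 : Triad M (tri e 0))
    (hT : Triangle M {e 4, e 0, e 2}) : Triangle M {e 5, e 0, e 1} := by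
  obtain ⟨C₁, hC₁', hC₁, he3⟩ :=
    hord.exists_isCircuit_of_triangle_four_zero_two hM (by omega) h0 hT
  have h2 := hord.triad_of_even h0 (i := 2) (by omega) rfl
  have h3 := hord.triangle_of_odd h0 (i := 3) (by omega) rfl
  have hne : C₁ ≠ tri e 3 := fun h => by
    have := hC₁' (h ▸ by simp [tri] : e 5 ∈ C₁)
    simp (disch := omega) only [mem_insert_iff, mem_singleton_iff,
      hord.apply_eq_apply_iff] at this
    omega
  obtain ⟨C₂, hC₂sub, hC₂⟩ := hC₁.elimination h3.isCircuit hne (e 3)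
  have hC₂' : C₂ ⊆ {e 0, e 1, e 4, e 5} := fun y hy => by
    obtain ⟨hy, hy3⟩ := hC₂sub hy
    simp only [tri, mem_union, mem_insert_iff, mem_singleton_iff] at hy hy3 ⊢
    rcases hy with hy | hy
    · have := hC₁' hy
      simp only [mem_insert_iff, mem_singleton_iff] at this
      tauto
    · tauto
  have he4 : e 4 ∉ C₂ := by
    refine hC₂.notMem_of_inter_subset h2.isCocircuit (by simp [tri]) fun y ⟨hyC, hyD⟩ => ?_
    have hy := hC₂' hyC
    simp only [tri, mem_insert_iff, mem_singleton_iff] at hy hyD ⊢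
    rcases hy with rfl | rfl | rfl | rfl <;>
      simp (disch := omega) only [hord.apply_eq_apply_iff] at hyD ⊢ <;> omega
  refine hM.triangle_of_isCircuit_subset (by have := hord.le_ncard_ground; omega) hC₂
    (fun y hy => ?_)
    (hord.ncard_triple (by omega) (by omega) (by omega) (by omega) (by omega) (by omega))
  have := hC₂' hy
  simp only [mem_insert_iff, mem_singleton_iff] at this ⊢
  rcases this with rfl | rfl | rfl | rfl
  exacts [Or.inr (Or.inl rfl), Or.inr (Or.inr rfl), absurd hy he4, Or.inl rfl]

lemma zero_notMem_triangle_of_one_mem (hM : ThreeConnected M) (hW : ¬ IsWheelOrWhirl M)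
    (hord : FanOrd M n e) (hmax : MaximalFan M (e '' Iio n)) (h0 : Triad M (tri e 0))
    (hT : Triangle M T) (h1T : e 1 ∈ T) : e 0 ∉ T := by
  intro h0T
  have h3 := hord.1
  obtain ⟨x, hx0, hx1, rfl⟩ := exists_eq_insert_pair_of_ncard_eq_three hT.2 h0T h1T
    (hord.2.1.ne (by simp only [mem_Iio]; omega) (by simp only [mem_Iio]; omega) (by omega))
  by_cases hxF : x ∈ e '' Iio n
  · obtain ⟨j, hj, rfl⟩ := hxF
    simp only [mem_Iio] at hj
    have hj2 : j ≠ 2 := by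
      rintro rfl
      refine hM.not_triad_of_triangle hW hT (by convert h0 using 2; ext; simp [tri]; tauto)
    rw [Ne, hord.apply_eq_apply_iff hj (by omega)] at hx0 hx1
    by_cases hwrap : j + 1 = n ∧ n % 2 = 0
    · obtain ⟨m, rfl⟩ : ∃ m, n = 2 * m := ⟨n / 2, by omega⟩
      exact hW (hord.isWheelOrWhirl_of_triangle hM h0 (by rwa [show 2 * m - 1 = j by omega]))
    obtain ⟨k, hk0, hk2, hkj, hjk, hkn⟩ :
        ∃ k, k % 2 = 0 ∧ 2 ≤ k ∧ k ≤ j ∧ j ≤ k + 2 ∧ k + 2 < n := by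
      rcases Nat.mod_two_eq_zero_or_one j with h | h
      · by_cases hjn : j + 2 < n
        · exact ⟨j, h, by omega, le_rfl, by omega, hjn⟩
        · exact ⟨j - 2, by omega, by omega, by omega, by omega, by omega⟩
      · exact ⟨j - 1, by omega, by omega, by omega, by omega, by omega⟩
    refine hT.isCircuit.notMem_of_inter_subset (hord.triad_of_even h0 hkn hk0).isCocircuit
      (x := e j) ?_ ?_ (mem_insert _ _)
    · simp (disch := omega) only [tri, mem_insert_iff, mem_singleton_iff, hord.apply_eq_apply_iff]
      omega
    · rintro y ⟨hy, hyD⟩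
      simp only [tri, mem_insert_iff, mem_singleton_iff] at hy hyD ⊢
      rcases hy with rfl | rfl | rfl <;>
        simp (disch := omega) only [hord.apply_eq_apply_iff] at hyD ⊢ <;> omega
  · have hext := hord.prepend h0 (hT.isCircuit.subset_ground (mem_insert _ _)) hxF hT
      (hM.not_triad_of_triangle hW hT)
    have heq := hmax.2 _ (Or.inr ⟨_, _, hext, rfl⟩) image_subset_image_prepend
    exact hxF (heq ▸ ⟨0, by simp, rfl⟩)

lemma zero_notMem_triangle_of_two_mem (hM : ThreeConnected M) (hW : ¬ IsWheelOrWhirl M)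
    (hord : FanOrd M n e) (hmax : MaximalFan M (e '' Iio n)) (h0 : Triad M (tri e 0))
    (hT : Triangle M T) (h2T : e 2 ∈ T) : e 0 ∉ T := by
  intro h0T
  have h3 := hord.1
  by_cases hn : n ≤ 4
  · exact (hord.comp_swap hn).zero_notMem_triangle_of_one_mem hM hW
      (by rwa [image_comp_swap h3]) (tri_comp_swap_zero ▸ h0) hT (by simpa using h2T)
      (by simpa [Equiv.swap_apply_of_ne_of_ne] using h0T)
  obtain ⟨x, hx0, hx2, rfl⟩ := exists_eq_insert_pair_of_ncard_eq_three hT.2 h0T h2T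
    (hord.2.1.ne (by simp only [mem_Iio]; omega) (by simp only [mem_Iio]; omega) (by omega))
  have h2 := hord.triad_of_even h0 (i := 2) (by omega) rfl
  have hx : x ∈ tri e 2 := by
    by_contra hx
    refine hT.isCircuit.notMem_of_inter_subset h2.isCocircuit (x := e 2) (by simp [tri]) ?_ h2T
    rintro y ⟨hy, hyD⟩
    simp only [mem_insert_iff, mem_singleton_iff] at hy ⊢
    rcases hy with rfl | rfl | rfl
    · exact absurd hyD hx
    · exact absurd hyD (hord.zero_notMem_tri (by norm_num) (by omega))
    · rfl
  simp only [tri, mem_insert_iff, mem_singleton_iff] at hx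
  rcases hx with rfl | rfl | rfl
  · exact hx2 rfl
  · exact hM.not_triad_of_triangle hW
      (hord.triangle_tri_zero_of_triangle_three_zero_two hM (by omega) h0 hT) h0
  · rcases Nat.lt_or_ge n 6 with hn6 | hn6
    · obtain rfl : n = 5 := by omega
      obtain ⟨w, -, hw⟩ := hord.exists_triangle_zero_one_of_length_five hM h0 hT
      exact hord.zero_notMem_triangle_of_one_mem hM hW hmax h0 hw (by simp) (by simp)
    · exact hord.zero_notMem_triangle_of_one_mem hM hW hmax h0
        (hord.triangle_five_zero_one_of_triangle_four_zero_two hM hn6 h0 hT) (by simp) (by simp)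

theorem zero_notMem_triangle (hM : ThreeConnected M) (hW : ¬ IsWheelOrWhirl M)
    (hord : FanOrd M n e) (hmax : MaximalFan M (e '' Iio n)) (h0 : Triad M (tri e 0))
    (hT : Triangle M T) : e 0 ∉ T := by
  intro h0T
  obtain ⟨y, ⟨hyT, hyD⟩, hy0⟩ : ∃ y ∈ T ∩ tri e 0, y ≠ e 0 := by
    by_contra! h
    exact hT.isCircuit.notMem_of_inter_subset h0.isCocircuit (by simp [tri]) h h0T
  simp only [tri, mem_insert_iff, mem_singleton_iff] at hyD
  rcases hyD with rfl | rfl | rfl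
  · exact hy0 rfl
  · exact hord.zero_notMem_triangle_of_one_mem hM hW hmax h0 hT hyT h0T
  · exact hord.zero_notMem_triangle_of_two_mem hM hW hmax h0 hT hyT h0T

end FanOrd

/-- Ends of a maximal fan in a 3-connected matroid that is not a wheel or whirl:
if the first triple is a triad then the first element is in no triangle, and
dually. -/
theorem stmt6 (M : Matroid α) [M.Finite] (hM : ThreeConnected M)
    (hW : ¬ IsWheelOrWhirl M) {n : ℕ} {e : ℕ → α} {F : Set α}
    (hord : FanOrd M n e) (hF : F = e '' Set.Iio n) (hmax : MaximalFan M F) :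
    (Triad M {e 0, e 1, e 2} → ∀ T, Triangle M T → e 0 ∉ T) ∧
    (Triangle M {e 0, e 1, e 2} → ∀ T, Triad M T → e 0 ∉ T) := by
  subst hF
  refine ⟨fun h0 T hT => hord.zero_notMem_triangle hM hW hmax h0 hT, fun h0 T hT => ?_⟩
  exact hord.dual.zero_notMem_triangle hM.dual (fun h => hW h.of_dual) hmax.dual
    (triad_dual_iff.2 h0) (triangle_dual_iff.2 hT)
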